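/- For every integer m ≥ 2, every θ ∈ [0,1], and every η ∈ (0,1], the set of minimizers of the linear function Σ_{i=1}^m 16^i (s_i + t_i) + η Σ_{i=1}^m 4^{−(m−i)} f_i over Flex(m, θ) equals Slex(m, θ). -/

import Mathlib

noncomputable section

/-- The tuple type `(z, f, s, t, u)` of five vectors in `ℝ^m`. -/
abbrev Tup (m : ℕ) : Type :=
  (Fin m → ℝ) × (Fin m → ℝ) × (Fin m → ℝ) × (Fin m → ℝ) × (Fin m → ℝ)

def Tz {m : ℕ} (p : Tup m) : Fin m → ℝ := p.1
def Tf {m : ℕ} (p : Tup m) : Fin m → ℝ := p.2.1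
def Ts {m : ℕ} (p : Tup m) : Fin m → ℝ := p.2.2.1
def Tt {m : ℕ} (p : Tup m) : Fin m → ℝ := p.2.2.2.1
def Tu {m : ℕ} (p : Tup m) : Fin m → ℝ := p.2.2.2.2

/-- The feasible set `Flex(m, θ)`. -/
def Flex (m : ℕ) (θ : ℝ) : Set (Tup m) :=
  { p | (∀ i : Fin m, i.val = m - 1 → Tu p i = θ) ∧
        (∀ i : Fin m,
          (3 / 2) * Tu p i - 1 / 2 ≤ Ts p i ∧
          (3 / 2) * Tu p i - 1 ≤ Tt p i ∧
          Tz p i = 2 * (Ts p i - Tt p i) ∧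
          -(Tf p i) ≤ Tz p i - 1 / 2 ∧ Tz p i - 1 / 2 ≤ Tf p i ∧
          0 ≤ Tz p i ∧ Tz p i ≤ 1 ∧ 0 ≤ Tf p i ∧ Tf p i ≤ 1 ∧
          0 ≤ Ts p i ∧ Ts p i ≤ 1 ∧ 0 ≤ Tt p i ∧ Tt p i ≤ 1 ∧
          0 ≤ Tu p i ∧ Tu p i ≤ 1) ∧
        (∀ i : Fin m, 1 ≤ i.val →
          Tu p ⟨i.val - 1, Nat.lt_of_le_of_lt (Nat.sub_le _ _) i.isLt⟩ =
            3 * Tu p i - 2 * Tz p i) }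

/-- The set of minimizers of `g` over `S`. -/
def argminOn {α : Type} (g : α → ℝ) (S : Set α) : Set α :=
  {x ∈ S | ∀ y ∈ S, g x ≤ g y}

/-- The lexicographic optimal set `Slex(m, θ)`: first minimize `s_m + t_m`, then
`s_{m-1} + t_{m-1}`, …, then `s_1 + t_1`, and finally `∑ f_i` over `Flex(m, θ)`. -/
def Slex (m : ℕ) (θ : ℝ) : Set (Tup m) :=
  argminOn (fun p => ∑ i : Fin m, Tf p i)
    ((List.finRange m).reverse.foldl
      (fun S i => argminOn (fun p => Ts p i + Tt p i) S) (Flex m θ))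

/-- the weighted objective
`Σ_{i=1}^m 16^i (s_i + t_i) + η Σ_{i=1}^m 4^{−(m−i)} f_i`. -/
def wObj (m : ℕ) (η : ℝ) (p : Tup m) : ℝ :=
  ∑ i : Fin m, (16 : ℝ) ^ (i.val + 1) * (Ts p i + Tt p i) +
    η * ∑ i : Fin m, (1 / 4 : ℝ) ^ (m - 1 - i.val) * Tf p i


namespace S10

/-- lower bound for s given u -/
def Af (u : ℝ) : ℝ := max (3/2*u - 1/2) 0
/-- lower bound for t given u -/
def Bf (u : ℝ) : ℝ := max (3/2*u - 1) 0
/-- canonical z -/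
def Zf (u : ℝ) : ℝ := 2 * (Af u - Bf u)
/-- tent-like map -/
def Tm (u : ℝ) : ℝ := 3*u - 2 * Zf u

lemma Af_nonneg (u : ℝ) : 0 ≤ Af u := le_max_right _ _
lemma Bf_nonneg (u : ℝ) : 0 ≤ Bf u := le_max_right _ _
lemma Af_ge (u : ℝ) : 3/2*u - 1/2 ≤ Af u := le_max_left _ _
lemma Bf_ge (u : ℝ) : 3/2*u - 1 ≤ Bf u := le_max_left _ _

lemma Af_le_one {u : ℝ} (h : u ≤ 1) : Af u ≤ 1 := by
  unfold Af; rw [max_le_iff]; constructor <;> linarith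
lemma Bf_le_one {u : ℝ} (h : u ≤ 1) : Bf u ≤ 1 := by
  unfold Bf; rw [max_le_iff]; constructor <;> linarith

lemma Af_lip (u v : ℝ) : |Af u - Af v| ≤ 3/2 * |u - v| := by
  have := abs_max_sub_max_le_abs (3/2*u - 1/2) (3/2*v - 1/2) 0
  unfold Af
  calc |max (3/2*u - 1/2) 0 - max (3/2*v - 1/2) 0| ≤ |(3/2*u - 1/2) - (3/2*v - 1/2)| := this
    _ = 3/2 * |u - v| := by rw [show (3/2*u - 1/2) - (3/2*v - 1/2) = 3/2*(u-v) by ring, abs_mul]; simp [abs_of_nonneg]; norm_num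

lemma Bf_lip (u v : ℝ) : |Bf u - Bf v| ≤ 3/2 * |u - v| := by
  have := abs_max_sub_max_le_abs (3/2*u - 1) (3/2*v - 1) 0
  unfold Bf
  calc |max (3/2*u - 1) 0 - max (3/2*v - 1) 0| ≤ |(3/2*u - 1) - (3/2*v - 1)| := this
    _ = 3/2 * |u - v| := by rw [show (3/2*u - 1) - (3/2*v - 1) = 3/2*(u-v) by ring, abs_mul]; simp [abs_of_nonneg]; norm_num

lemma Zf_eq_abs {u : ℝ} (h0 : 0 ≤ u) (h1 : u ≤ 1) :
    Zf u = (|3*u - 1| - |3*u - 2| + 1) / 2 := by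
  unfold Zf Af Bf
  rcases le_total u (1/3) with h | h
  · rw [max_eq_right (by linarith), max_eq_right (by linarith),
      abs_of_nonpos (by linarith : 3*u-1 ≤ (0:ℝ)), abs_of_nonpos (by linarith : 3*u-2 ≤ (0:ℝ))]
    ring
  · rcases le_total u (2/3) with h' | h'
    · rw [max_eq_left (by linarith), max_eq_right (by linarith),
        abs_of_nonneg (by linarith : (0:ℝ) ≤ 3*u-1), abs_of_nonpos (by linarith : 3*u-2 ≤ (0:ℝ))]
      ring
    · rw [max_eq_left (by linarith), max_eq_left (by linarith),
        abs_of_nonneg (by linarith : (0:ℝ) ≤ 3*u-1), abs_of_nonneg (by linarith : (0:ℝ) ≤ 3*u-2)]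
      ring

lemma Zf_lip {u v : ℝ} (hu0 : 0 ≤ u) (hu1 : u ≤ 1) (hv0 : 0 ≤ v) (hv1 : v ≤ 1) :
    |Zf u - Zf v| ≤ 3 * |u - v| := by
  rw [Zf_eq_abs hu0 hu1, Zf_eq_abs hv0 hv1]
  have h1 : abs (|3*u-1| - |3*v-1|) ≤ |(3*u-1) - (3*v-1)| := abs_abs_sub_abs_le_abs_sub _ _
  have h2 : abs (|3*u-2| - |3*v-2|) ≤ |(3*u-2) - (3*v-2)| := abs_abs_sub_abs_le_abs_sub _ _
  have e1 : (3*u-1) - (3*v-1) = 3*(u-v) := by ring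
  have e2 : (3*u-2) - (3*v-2) = 3*(u-v) := by ring
  rw [e1] at h1; rw [e2] at h2
  have e3 : |(3:ℝ)*(u-v)| = 3 * |u-v| := by
    rw [abs_mul]; norm_num
  rw [e3] at h1 h2
  have key : ((|3*u-1| - |3*u-2| + 1) / 2) - ((|3*v-1| - |3*v-2| + 1) / 2)
      = ((|3*u-1| - |3*v-1|) - (|3*u-2| - |3*v-2|)) / 2 := by ring
  rw [key]
  rw [abs_div, abs_two]
  have := abs_sub (|3*u-1| - |3*v-1|) (|3*u-2| - |3*v-2|)
  linarith

-- case values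
lemma Zf_cases (u : ℝ) (h0 : 0 ≤ u) (h1 : u ≤ 1) :
    (u ≤ 1/3 ∧ Zf u = 0) ∨ (1/3 ≤ u ∧ u ≤ 2/3 ∧ Zf u = 3*u - 1) ∨ (2/3 ≤ u ∧ Zf u = 1) := by
  unfold Zf Af Bf
  rcases le_total u (1/3) with h | h
  · left; refine ⟨h, ?_⟩
    rw [max_eq_right (by linarith), max_eq_right (by linarith)]; ring
  · rcases le_total u (2/3) with h' | h'
    · right; left; refine ⟨h, h', ?_⟩
      rw [max_eq_left (by linarith), max_eq_right (by linarith)]; ring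
    · right; right; refine ⟨h', ?_⟩
      rw [max_eq_left (by linarith), max_eq_left (by linarith)]; ring

lemma Zf_mem {u : ℝ} (h0 : 0 ≤ u) (h1 : u ≤ 1) : 0 ≤ Zf u ∧ Zf u ≤ 1 := by
  rcases Zf_cases u h0 h1 with ⟨h, e⟩ | ⟨h, h', e⟩ | ⟨h, e⟩ <;> rw [e] <;> constructor <;> linarith

lemma Tm_mem {u : ℝ} (h0 : 0 ≤ u) (h1 : u ≤ 1) : 0 ≤ Tm u ∧ Tm u ≤ 1 := by
  unfold Tm
  rcases Zf_cases u h0 h1 with ⟨h, e⟩ | ⟨h, h', e⟩ | ⟨h, e⟩ <;> rw [e] <;> constructor <;> linarith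

lemma Tm_eq_abs {u : ℝ} (h0 : 0 ≤ u) (h1 : u ≤ 1) : Tm u = abs (1 - |3*u - 1|) := by
  unfold Tm
  rcases Zf_cases u h0 h1 with ⟨h, e⟩ | ⟨h, h', e⟩ | ⟨h, e⟩ <;> rw [e]
  · rw [abs_of_nonpos (by linarith : 3*u-1 ≤ (0:ℝ)), abs_of_nonneg (by linarith : (0:ℝ) ≤ 1-(-(3*u-1)))]
    ring
  · rw [abs_of_nonneg (by linarith : (0:ℝ) ≤ 3*u-1), abs_of_nonneg (by linarith : (0:ℝ) ≤ 1-(3*u-1))]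
    ring
  · rw [abs_of_nonneg (by linarith : (0:ℝ) ≤ 3*u-1), abs_of_nonpos (by linarith : 1-(3*u-1) ≤ (0:ℝ))]
    ring

lemma Tm_lip {u v : ℝ} (hu0 : 0 ≤ u) (hu1 : u ≤ 1) (hv0 : 0 ≤ v) (hv1 : v ≤ 1) :
    |Tm u - Tm v| ≤ 3 * |u - v| := by
  rw [Tm_eq_abs hu0 hu1, Tm_eq_abs hv0 hv1]
  have h1 : abs (abs (1 - |3*u-1|) - abs (1 - |3*v-1|)) ≤ abs ((1 - |3*u-1|) - (1 - |3*v-1|)) :=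
    abs_abs_sub_abs_le_abs_sub _ _
  have h2 : (1 - |3*u-1|) - (1 - |3*v-1|) = -(|3*u-1| - |3*v-1|) := by ring
  have h3 : abs (|3*u-1| - |3*v-1|) ≤ abs ((3*u-1) - (3*v-1)) := abs_abs_sub_abs_le_abs_sub _ _
  have h4 : (3*u-1) - (3*v-1) = 3*(u - v) := by ring
  have e3 : |(3:ℝ)*(u-v)| = 3 * |u-v| := by rw [abs_mul]; norm_num
  rw [h2, abs_neg] at h1
  rw [h4, e3] at h3
  linarith


-- chunk2 : canonical point, Flex facts  (to be appended inside namespace S10)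
def vseq (θ : ℝ) : ℕ → ℝ
  | 0 => θ
  | k+1 => Tm (vseq θ k)

lemma vseq_mem {θ : ℝ} (hθ : θ ∈ Set.Icc (0:ℝ) 1) (k : ℕ) :
    0 ≤ vseq θ k ∧ vseq θ k ≤ 1 := by
  induction k with
  | zero => exact ⟨hθ.1, hθ.2⟩
  | succ k ih => exact Tm_mem ih.1 ih.2

def ustar (m : ℕ) (θ : ℝ) (i : Fin m) : ℝ := vseq θ (m - 1 - i.val)

def pstar (m : ℕ) (θ : ℝ) : Tup m :=
  (fun i => Zf (ustar m θ i), fun i => |Zf (ustar m θ i) - 1/2|,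
   fun i => Af (ustar m θ i), fun i => Bf (ustar m θ i), fun i => ustar m θ i)

lemma pstar_comp (m : ℕ) (θ : ℝ) :
    (∀ i, Tz (pstar m θ) i = Zf (ustar m θ i)) ∧
    (∀ i, Tf (pstar m θ) i = |Zf (ustar m θ i) - 1/2|) ∧
    (∀ i, Ts (pstar m θ) i = Af (ustar m θ i)) ∧
    (∀ i, Tt (pstar m θ) i = Bf (ustar m θ i)) ∧
    (∀ i, Tu (pstar m θ) i = ustar m θ i) :=
  ⟨fun _ => rfl, fun _ => rfl, fun _ => rfl, fun _ => rfl, fun _ => rfl⟩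

lemma pstar_mem {m : ℕ} {θ : ℝ} (hθ : θ ∈ Set.Icc (0:ℝ) 1) :
    pstar m θ ∈ Flex m θ := by
  refine ⟨?_, ?_, ?_⟩
  · intro i hi
    show ustar m θ i = θ
    unfold ustar
    rw [show m - 1 - i.val = 0 by omega]
    rfl
  · intro i
    have hu := vseq_mem hθ (m - 1 - i.val)
    set u := ustar m θ i with hu_def
    have hu0 : 0 ≤ u := hu.1
    have hu1 : u ≤ 1 := hu.2
    have hz := Zf_mem hu0 hu1
    refine ⟨Af_ge u, Bf_ge u, rfl, neg_abs_le _, le_abs_self _, hz.1, hz.2,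
      abs_nonneg _, ?_, Af_nonneg u, Af_le_one hu1, Bf_nonneg u, Bf_le_one hu1, hu0, hu1⟩
    show |Zf (ustar m θ i) - 1/2| ≤ 1
    rw [abs_le]; constructor <;> linarith [hz.1, hz.2]
  · intro i hi
    show ustar m θ _ = 3 * ustar m θ i - 2 * Zf (ustar m θ i)
    unfold ustar
    have h1 : m - 1 - (i.val - 1) = (m - 1 - i.val) + 1 := by omega
    rw [h1]
    show Tm (vseq θ (m - 1 - i.val)) = _
    unfold Tm
    ring

def dv {m : ℕ} (p : Tup m) (i : Fin m) : ℝ :=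
  (Ts p i - Af (Tu p i)) + (Tt p i - Bf (Tu p i))

def er (m : ℕ) (θ : ℝ) (p : Tup m) (i : Fin m) : ℝ := |Tu p i - ustar m θ i|

def wt (m : ℕ) (i : Fin m) : ℝ := (1/4 : ℝ) ^ (m - 1 - i.val)

def Dterm (m : ℕ) (θ η : ℝ) (p : Tup m) (j : Fin m) : ℝ :=
  16 ^ (j.val + 1) * (Ts p j + Tt p j - (Af (ustar m θ j) + Bf (ustar m θ j)))
    + η * wt m j * (Tf p j - |Zf (ustar m θ j) - 1/2|)

section StageLemmas

variable {m : ℕ} {θ : ℝ} {p : Tup m}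

lemma ustar_mem (hθ : θ ∈ Set.Icc (0:ℝ) 1) (i : Fin m) :
    0 ≤ ustar m θ i ∧ ustar m θ i ≤ 1 := vseq_mem hθ _

lemma ustar_succ {i : Fin m} (hi : 1 ≤ i.val) :
    ustar m θ ⟨i.val - 1, Nat.lt_of_le_of_lt (Nat.sub_le _ _) i.isLt⟩ = Tm (ustar m θ i) := by
  show vseq θ (m - 1 - (i.val - 1)) = Tm (vseq θ (m - 1 - i.val))
  rw [show m - 1 - (i.val - 1) = (m - 1 - i.val) + 1 by omega]
  rfl

lemma ustar_top (hθ : θ ∈ Set.Icc (0:ℝ) 1) {i : Fin m} (hi : i.val = m - 1) :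
    ustar m θ i = θ := by
  show vseq θ (m - 1 - i.val) = θ
  rw [hi, Nat.sub_self]
  rfl

lemma s_ge (hp : p ∈ Flex m θ) (i : Fin m) : Af (Tu p i) ≤ Ts p i :=
  max_le (hp.2.1 i).1 (hp.2.1 i).2.2.2.2.2.2.2.2.2.1

lemma t_ge (hp : p ∈ Flex m θ) (i : Fin m) : Bf (Tu p i) ≤ Tt p i :=
  max_le (hp.2.1 i).2.1 (hp.2.1 i).2.2.2.2.2.2.2.2.2.2.2.1

lemma dv_nonneg (hp : p ∈ Flex m θ) (i : Fin m) : 0 ≤ dv p i := by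
  have h1 := s_ge hp i; have h2 := t_ge hp i; unfold dv; linarith

lemma z_close (hp : p ∈ Flex m θ) (i : Fin m) :
    |Tz p i - Zf (Tu p i)| ≤ 2 * dv p i := by
  have h1 := s_ge hp i; have h2 := t_ge hp i
  have hz := (hp.2.1 i).2.2.1
  rw [abs_le]; unfold dv
  constructor <;> (rw [hz]; unfold Zf; nlinarith)

lemma er_nonneg (i : Fin m) : 0 ≤ er m θ p i := abs_nonneg _

lemma er_top (hp : p ∈ Flex m θ) (hθ : θ ∈ Set.Icc (0:ℝ) 1) {i : Fin m} (hi : i.val = m - 1) :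
    er m θ p i = 0 := by
  unfold er
  rw [hp.1 i hi, ustar_top hθ hi, sub_self, abs_zero]

lemma st_dev (hp : p ∈ Flex m θ) (hθ : θ ∈ Set.Icc (0:ℝ) 1) (i : Fin m) :
    dv p i - 3 * er m θ p i ≤ Ts p i + Tt p i - (Af (ustar m θ i) + Bf (ustar m θ i)) := by
  have hA := Af_lip (Tu p i) (ustar m θ i)
  have hB := Bf_lip (Tu p i) (ustar m θ i)
  have hA' := neg_abs_le (Af (Tu p i) - Af (ustar m θ i))
  have hB' := neg_abs_le (Bf (Tu p i) - Bf (ustar m θ i))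
  unfold dv er at *
  linarith

lemma f_dev (hp : p ∈ Flex m θ) (hθ : θ ∈ Set.Icc (0:ℝ) 1) (i : Fin m) :
    -(2 * dv p i + 3 * er m θ p i) ≤ Tf p i - |Zf (ustar m θ i) - 1/2| := by
  have hc := hp.2.1 i
  have hu0 := hc.2.2.2.2.2.2.2.2.2.2.2.2.2.1
  have hu1 := hc.2.2.2.2.2.2.2.2.2.2.2.2.2.2
  have hus := ustar_mem hθ i
  have hf : |Tz p i - 1/2| ≤ Tf p i := abs_le.mpr ⟨by linarith [hc.2.2.2.1], hc.2.2.2.2.1⟩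
  have h1 : |Zf (ustar m θ i) - 1/2| - |Tz p i - 1/2| ≤ |Zf (ustar m θ i) - Tz p i| := by
    have := abs_sub_abs_le_abs_sub (Zf (ustar m θ i) - 1/2) (Tz p i - 1/2)
    calc |Zf (ustar m θ i) - 1/2| - |Tz p i - 1/2| ≤ |(Zf (ustar m θ i) - 1/2) - (Tz p i - 1/2)| := this
      _ = |Zf (ustar m θ i) - Tz p i| := by ring_nf
  have h2 : |Zf (ustar m θ i) - Tz p i| ≤ |Zf (ustar m θ i) - Zf (Tu p i)| + |Zf (Tu p i) - Tz p i| :=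
    abs_sub_le _ _ _
  have h3 : |Zf (ustar m θ i) - Zf (Tu p i)| ≤ 3 * er m θ p i := by
    have := Zf_lip hus.1 hus.2 hu0 hu1
    unfold er
    rw [abs_sub_comm (Tu p i)]
    exact this
  have h4 : |Zf (Tu p i) - Tz p i| ≤ 2 * dv p i := by
    rw [abs_sub_comm]; exact z_close hp i
  linarith

lemma er_rec (hp : p ∈ Flex m θ) (hθ : θ ∈ Set.Icc (0:ℝ) 1) {i : Fin m} (hi : 1 ≤ i.val) :
    er m θ p ⟨i.val - 1, Nat.lt_of_le_of_lt (Nat.sub_le _ _) i.isLt⟩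
      ≤ 4 * dv p i + 3 * er m θ p i := by
  have hc := hp.2.1 i
  have hu0 := hc.2.2.2.2.2.2.2.2.2.2.2.2.2.1
  have hu1 := hc.2.2.2.2.2.2.2.2.2.2.2.2.2.2
  have hus := ustar_mem hθ i
  have hrec := hp.2.2 i hi
  unfold er
  rw [hrec, ustar_succ hi]
  have h1 : |3 * Tu p i - 2 * Tz p i - Tm (ustar m θ i)|
      ≤ |3 * Tu p i - 2 * Tz p i - Tm (Tu p i)| + |Tm (Tu p i) - Tm (ustar m θ i)| :=
    abs_sub_le _ _ _
  have h2 : 3 * Tu p i - 2 * Tz p i - Tm (Tu p i) = 2 * (Zf (Tu p i) - Tz p i) := by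
    unfold Tm; ring
  have h3 : |(2:ℝ) * (Zf (Tu p i) - Tz p i)| ≤ 4 * dv p i := by
    rw [abs_mul, abs_two, abs_sub_comm]
    have := z_close hp i
    linarith
  have h4 : |Tm (Tu p i) - Tm (ustar m θ i)| ≤ 3 * er m θ p i := by
    exact Tm_lip hu0 hu1 hus.1 hus.2
  rw [h2] at h1
  unfold er at *
  linarith

end StageLemmas

def Kset (m k : ℕ) : Finset (Fin m) := Finset.univ.filter (fun j => k < j.val)

lemma Kset_top (m : ℕ) : Kset m (m-1) = ∅ := by
  ext j; simp only [Kset, Finset.mem_filter, Finset.mem_univ, true_and, Finset.notMem_empty,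
    iff_false]
  have := j.isLt; omega

lemma Kset_not_mem {m k : ℕ} (h : k + 1 < m) : (⟨k+1, h⟩ : Fin m) ∉ Kset m (k+1) := by
  simp [Kset]

lemma Kset_insert {m k : ℕ} (h : k + 1 < m) :
    Kset m k = insert (⟨k+1, h⟩ : Fin m) (Kset m (k+1)) := by
  ext j
  simp only [Kset, Finset.mem_filter, Finset.mem_univ, true_and, Finset.mem_insert, Fin.ext_iff]
  omega

lemma univ_eq_insert {m : ℕ} (h : 0 < m) :
    (Finset.univ : Finset (Fin m)) = insert (⟨0, h⟩ : Fin m) (Kset m 0) := by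
  ext j
  simp only [Finset.mem_univ, Finset.mem_insert, Kset, Finset.mem_filter, true_and, true_iff,
    Fin.ext_iff]
  omega

lemma zero_not_mem {m : ℕ} (h : 0 < m) : (⟨0, h⟩ : Fin m) ∉ Kset m 0 := by simp [Kset]

lemma wt_pos (m : ℕ) (i : Fin m) : 0 < wt m i := pow_pos (by norm_num) _

lemma wt_le_one (m : ℕ) (i : Fin m) : wt m i ≤ 1 := by
  apply pow_le_one₀ <;> norm_num

lemma step_arith (Q w η δ e e0 S T D : ℝ)
    (hQ : 16 ≤ Q) (hw0 : 0 < w) (hw1 : w ≤ 1) (hη0 : 0 < η) (hη1 : η ≤ 1)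
    (hδ : 0 ≤ δ) (he : 0 ≤ e) (he0 : 0 ≤ e0) (hrec : e0 ≤ 4*δ + 3*e)
    (hD : 16*Q*(δ - 3*e) + η*w*(-(2*δ+3*e)) ≤ D)
    (hIH : (19/5*(16*Q) - 2*w)*e + (1/20)*S ≤ T) :
    (19/5*Q - 2*(w*(1/4)))*e0 + (1/20)*(16*Q*δ + S) ≤ D + T := by
  have hco : (0:ℝ) ≤ 19/5*Q - w/2 := by linarith
  have h1 := mul_le_mul_of_nonneg_left hrec hco
  have h2 : η*w*δ ≤ w*δ := by nlinarith [mul_nonneg (mul_nonneg (sub_nonneg.2 hη1) hw0.le) hδ]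
  have hηw : η*w ≤ 1 := by
    calc η*w ≤ 1*1 := mul_le_mul hη1 hw1 hw0.le zero_le_one
    _ = 1 := one_mul 1
  have h3 : η*w*e ≤ e := by
    calc η*w*e ≤ 1*e := mul_le_mul_of_nonneg_right hηw he
    _ = e := one_mul e
  have h4 : w*e ≤ e := by
    calc w*e ≤ 1*e := mul_le_mul_of_nonneg_right hw1 he
    _ = e := one_mul e
  have h5 : 16*e ≤ Q*e := mul_le_mul_of_nonneg_right hQ he
  nlinarith [h1, h2, h3, h4, h5]

lemma total_arith (w η δ e0 S T D : ℝ)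
    (hw0 : 0 < w) (hw1 : w ≤ 1) (hη0 : 0 < η) (hη1 : η ≤ 1)
    (hδ : 0 ≤ δ) (he0 : 0 ≤ e0)
    (hD : 16*(δ - 3*e0) + η*w*(-(2*δ+3*e0)) ≤ D)
    (hIH : (19/5*16 - 2*w)*e0 + (1/20)*S ≤ T) :
    (1/20)*(16*δ + S) ≤ D + T := by
  have hηw : η*w ≤ 1 := by
    calc η*w ≤ 1*1 := mul_le_mul hη1 hw1 hw0.le zero_le_one
    _ = 1 := one_mul 1
  have h2 : η*w*δ ≤ δ := by
    calc η*w*δ ≤ 1*δ := mul_le_mul_of_nonneg_right hηw hδ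
    _ = δ := one_mul δ
  have h3 : η*w*e0 ≤ e0 := by
    calc η*w*e0 ≤ 1*e0 := mul_le_mul_of_nonneg_right hηw he0
    _ = e0 := one_mul e0
  have h4 : w*e0 ≤ e0 := by
    calc w*e0 ≤ 1*e0 := mul_le_mul_of_nonneg_right hw1 he0
    _ = e0 := one_mul e0
  nlinarith [h2, h3, h4]

section Invariant

variable {m : ℕ} {θ η : ℝ} {p : Tup m}

lemma invariant (hp : p ∈ Flex m θ) (hθ : θ ∈ Set.Icc (0:ℝ) 1)
    (hη : η ∈ Set.Ioc (0:ℝ) 1) :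
    ∀ d k (hk : k < m), m - 1 - k ≤ d →
    (19/5 * 16^(k+1) - 2 * wt m ⟨k, hk⟩) * er m θ p ⟨k, hk⟩
      + (1/20) * ∑ j ∈ Kset m k, 16^(j.val+1) * dv p j
    ≤ ∑ j ∈ Kset m k, Dterm m θ η p j := by
  intro d
  induction d with
  | zero =>
    intro k hk hd
    have hk' : k = m - 1 := by omega
    subst hk'
    rw [Kset_top, er_top hp hθ rfl]
    simp
  | succ d ih =>
    intro k hk hd
    by_cases hktop : k = m - 1
    · subst hktop
      rw [Kset_top, er_top hp hθ rfl]
      simp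
    · have hk1 : k + 1 < m := by omega
      have IH := ih (k+1) hk1 (by omega)
      rw [Kset_insert hk1, Finset.sum_insert (Kset_not_mem hk1),
        Finset.sum_insert (Kset_not_mem hk1)]
      have hst := st_dev hp hθ (⟨k+1, hk1⟩ : Fin m)
      have hf := f_dev hp hθ (⟨k+1, hk1⟩ : Fin m)
      have hrec : er m θ p ⟨k, hk⟩
          ≤ 4 * dv p ⟨k+1, hk1⟩ + 3 * er m θ p ⟨k+1, hk1⟩ :=
        er_rec hp hθ (i := ⟨k+1, hk1⟩) (by simp)
      have hδ := dv_nonneg hp (⟨k+1, hk1⟩ : Fin m)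
      have he := er_nonneg (θ := θ) (p := p) (⟨k+1, hk1⟩ : Fin m)
      have he0 := er_nonneg (θ := θ) (p := p) (⟨k, hk⟩ : Fin m)
      have hw0 : (0:ℝ) < wt m ⟨k+1, hk1⟩ := wt_pos m _
      have hw1 : wt m ⟨k+1, hk1⟩ ≤ 1 := wt_le_one m _
      have hη0 := hη.1
      have hη1 := hη.2
      have hwrel : wt m ⟨k, hk⟩ = wt m ⟨k+1, hk1⟩ * (1/4) := by
        show ((1:ℝ)/4) ^ (m - 1 - k) = (1/4) ^ (m - 1 - (k+1)) * (1/4)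
        rw [← pow_succ]
        congr 1
        omega
      have hQ : (16:ℝ) ≤ 16^(k+1) := by
        calc (16:ℝ) = 16^1 := (pow_one _).symm
        _ ≤ 16^(k+1) := pow_le_pow_right₀ (by norm_num) (by omega)
      have hpow : (16:ℝ)^(((⟨k+1, hk1⟩ : Fin m)).val + 1) = 16 * 16^(k+1) := by
        show (16:ℝ)^(k+1+1) = 16 * 16^(k+1)
        rw [pow_succ]; ring
      have hD1 : 16 * 16^(k+1) * (dv p ⟨k+1, hk1⟩ - 3 * er m θ p ⟨k+1, hk1⟩)
          + η * wt m ⟨k+1, hk1⟩ * (-(2 * dv p ⟨k+1, hk1⟩ + 3 * er m θ p ⟨k+1, hk1⟩))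
          ≤ Dterm m θ η p ⟨k+1, hk1⟩ := by
        unfold Dterm
        rw [hpow]
        have a1 := mul_le_mul_of_nonneg_left hst
          (by positivity : (0:ℝ) ≤ 16 * 16^(k+1))
        have a2 := mul_le_mul_of_nonneg_left hf
          (mul_nonneg hη0.le hw0.le)
        linarith
      have hIH' : (19/5*(16*16^(k+1)) - 2*wt m ⟨k+1, hk1⟩) * er m θ p ⟨k+1, hk1⟩
          + (1/20) * ∑ j ∈ Kset m (k+1), 16^(j.val+1) * dv p j
          ≤ ∑ j ∈ Kset m (k+1), Dterm m θ η p j := by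
        have e1 : (19:ℝ)/5*(16*16^(k+1)) = 19/5 * 16^(k+1+1) := by rw [pow_succ]; ring
        rw [e1]
        exact IH
      have key := step_arith (16^(k+1)) (wt m ⟨k+1, hk1⟩) η (dv p ⟨k+1, hk1⟩)
        (er m θ p ⟨k+1, hk1⟩) (er m θ p ⟨k, hk⟩)
        (∑ j ∈ Kset m (k+1), 16^(j.val+1) * dv p j)
        (∑ j ∈ Kset m (k+1), Dterm m θ η p j)
        (Dterm m θ η p ⟨k+1, hk1⟩)
        hQ hw0 hw1 hη0 hη1 hδ he he0 hrec hD1 hIH'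
      rw [hwrel, hpow]
      linarith [key]

lemma total_ineq (hm : 2 ≤ m) (hp : p ∈ Flex m θ) (hθ : θ ∈ Set.Icc (0:ℝ) 1)
    (hη : η ∈ Set.Ioc (0:ℝ) 1) :
    (1/20) * ∑ j : Fin m, 16^(j.val+1) * dv p j ≤ ∑ j : Fin m, Dterm m θ η p j := by
  have h0 : 0 < m := by omega
  have IH := invariant hp hθ hη (m-1) 0 h0 (by omega)
  rw [univ_eq_insert h0, Finset.sum_insert (zero_not_mem h0),
    Finset.sum_insert (zero_not_mem h0)]
  have hst := st_dev hp hθ (⟨0, h0⟩ : Fin m)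
  have hf := f_dev hp hθ (⟨0, h0⟩ : Fin m)
  have hδ := dv_nonneg hp (⟨0, h0⟩ : Fin m)
  have he0 := er_nonneg (θ := θ) (p := p) (⟨0, h0⟩ : Fin m)
  have hw0 : (0:ℝ) < wt m ⟨0, h0⟩ := wt_pos m _
  have hw1 : wt m ⟨0, h0⟩ ≤ 1 := wt_le_one m _
  have hη0 := hη.1
  have hη1 := hη.2
  have hpow : (16:ℝ)^(((⟨0, h0⟩ : Fin m)).val + 1) = 16 := by norm_num
  have hD1 : 16 * (dv p ⟨0, h0⟩ - 3 * er m θ p ⟨0, h0⟩)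
      + η * wt m ⟨0, h0⟩ * (-(2 * dv p ⟨0, h0⟩ + 3 * er m θ p ⟨0, h0⟩))
      ≤ Dterm m θ η p ⟨0, h0⟩ := by
    unfold Dterm
    rw [hpow]
    have a1 := mul_le_mul_of_nonneg_left hst (by norm_num : (0:ℝ) ≤ (16:ℝ))
    have a2 := mul_le_mul_of_nonneg_left hf (mul_nonneg hη0.le hw0.le)
    linarith
  have hIH' : (19/5*16 - 2*wt m ⟨0, h0⟩) * er m θ p ⟨0, h0⟩
      + (1/20) * ∑ j ∈ Kset m 0, 16^(j.val+1) * dv p j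
      ≤ ∑ j ∈ Kset m 0, Dterm m θ η p j := by
    have e1 : (19:ℝ)/5*16 = 19/5 * 16^(0+1) := by norm_num
    rw [e1]
    exact IH
  have key := total_arith (wt m ⟨0, h0⟩) η (dv p ⟨0, h0⟩) (er m θ p ⟨0, h0⟩)
    (∑ j ∈ Kset m 0, 16^(j.val+1) * dv p j)
    (∑ j ∈ Kset m 0, Dterm m θ η p j)
    (Dterm m θ η p ⟨0, h0⟩)
    hw0 hw1 hη0 hη1 hδ he0 hD1 hIH'
  rw [hpow]
  linarith [key]

end Invariant

section WeightedArgmin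

variable {m : ℕ} {θ η : ℝ} {p : Tup m}

lemma sum_Dterm_eq (m : ℕ) (θ η : ℝ) (p : Tup m) :
    ∑ j : Fin m, Dterm m θ η p j = wObj m η p - wObj m η (pstar m θ) := by
  have e1 : ∀ j : Fin m, Dterm m θ η p j
      = ((16:ℝ)^(j.val+1) * (Ts p j + Tt p j) + η * ((1/4:ℝ)^(m-1-j.val) * Tf p j))
        - ((16:ℝ)^(j.val+1) * (Af (ustar m θ j) + Bf (ustar m θ j))
          + η * ((1/4:ℝ)^(m-1-j.val) * |Zf (ustar m θ j) - 1/2|)) := by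
    intro j; unfold Dterm wt; ring
  rw [Finset.sum_congr rfl (fun j _ => e1 j), Finset.sum_sub_distrib,
    Finset.sum_add_distrib, Finset.sum_add_distrib, ← Finset.mul_sum, ← Finset.mul_sum]
  rfl

lemma dv_sum_nonneg (hp : p ∈ Flex m θ) :
    0 ≤ ∑ j : Fin m, (16:ℝ)^(j.val+1) * dv p j :=
  Finset.sum_nonneg fun j _ => mul_nonneg (by positivity) (dv_nonneg hp j)

lemma pstar_min (hm : 2 ≤ m) (hθ : θ ∈ Set.Icc (0:ℝ) 1) (hη : η ∈ Set.Ioc (0:ℝ) 1)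
    (hq : p ∈ Flex m θ) : wObj m η (pstar m θ) ≤ wObj m η p := by
  have h := total_ineq hm hq hθ hη
  rw [sum_Dterm_eq] at h
  have := dv_sum_nonneg hq
  linarith

lemma er_all_zero (hp : p ∈ Flex m θ) (hθ : θ ∈ Set.Icc (0:ℝ) 1)
    (hdv : ∀ j, dv p j = 0) :
    ∀ d (j : Fin m), m - 1 - j.val ≤ d → er m θ p j = 0 := by
  intro d
  induction d with
  | zero =>
    intro j hd
    exact er_top hp hθ (by have := j.isLt; omega)
  | succ d ih =>
    intro j hd
    by_cases hj : j.val = m - 1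
    · exact er_top hp hθ hj
    · have hj1 : j.val + 1 < m := by have := j.isLt; omega
      have h := er_rec hp hθ (i := ⟨j.val+1, hj1⟩) (by simp)
      have h' : er m θ p j ≤ 4 * dv p ⟨j.val+1, hj1⟩ + 3 * er m θ p ⟨j.val+1, hj1⟩ := h
      have hz := ih ⟨j.val+1, hj1⟩ (by simp; omega)
      rw [hdv, hz] at h'
      exact le_antisymm (by linarith) (er_nonneg j)

lemma min_unique (hm : 2 ≤ m) (hθ : θ ∈ Set.Icc (0:ℝ) 1) (hη : η ∈ Set.Ioc (0:ℝ) 1)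
    (hq : p ∈ Flex m θ) (hle : wObj m η p ≤ wObj m η (pstar m θ)) : p = pstar m θ := by
  have h := total_ineq hm hq hθ hη
  rw [sum_Dterm_eq] at h
  have hsum0 : ∑ j : Fin m, (16:ℝ)^(j.val+1) * dv p j = 0 :=
    le_antisymm (by linarith) (dv_sum_nonneg hq)
  have hdv : ∀ j : Fin m, dv p j = 0 := by
    intro j
    have := (Finset.sum_eq_zero_iff_of_nonneg
      (fun j _ => mul_nonneg (by positivity) (dv_nonneg hq j))).1 hsum0 j (Finset.mem_univ j)
    have hpos : (0:ℝ) < 16^(j.val+1) := by positivity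
    exact (mul_eq_zero.1 this).resolve_left (by positivity)
  have her : ∀ j : Fin m, er m θ p j = 0 := fun j =>
    er_all_zero hq hθ hdv m j (by omega)
  have hu : ∀ j : Fin m, Tu p j = ustar m θ j := by
    intro j
    have := her j
    unfold er at this
    rw [abs_eq_zero, sub_eq_zero] at this
    exact this
  have hs : ∀ j : Fin m, Ts p j = Af (ustar m θ j) := by
    intro j
    have h1 := s_ge hq j
    have h2 := t_ge hq j
    have h3 := hdv j
    unfold dv at h3
    rw [hu j] at h1 h2 h3
    linarith
  have ht : ∀ j : Fin m, Tt p j = Bf (ustar m θ j) := by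
    intro j
    have h1 := s_ge hq j
    have h2 := t_ge hq j
    have h3 := hdv j
    unfold dv at h3
    rw [hu j] at h1 h2 h3
    linarith
  have hz : ∀ j : Fin m, Tz p j = Zf (ustar m θ j) := by
    intro j
    rw [(hq.2.1 j).2.2.1, hs j, ht j]
    unfold Zf
    ring
  -- now the f part
  have hfge : ∀ j : Fin m, |Zf (ustar m θ j) - 1/2| ≤ Tf p j := by
    intro j
    have hc := hq.2.1 j
    rw [← hz j]
    exact abs_le.mpr ⟨by linarith [hc.2.2.2.1], hc.2.2.2.2.1⟩
  have hsumf : ∑ j : Fin m, Dterm m θ η p j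
      = ∑ j : Fin m, η * wt m j * (Tf p j - |Zf (ustar m θ j) - 1/2|) := by
    apply Finset.sum_congr rfl
    intro j _
    unfold Dterm
    rw [hs j, ht j]
    ring
  have hf : ∀ j : Fin m, Tf p j = |Zf (ustar m θ j) - 1/2| := by
    have hnn : 0 ≤ ∑ j : Fin m, η * wt m j * (Tf p j - |Zf (ustar m θ j) - 1/2|) :=
      Finset.sum_nonneg fun j _ => mul_nonneg
        (mul_nonneg hη.1.le (wt_pos m j).le) (by linarith [hfge j])
    have hzero : ∑ j : Fin m, η * wt m j * (Tf p j - |Zf (ustar m θ j) - 1/2|) = 0 := by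
      apply le_antisymm ?_ hnn
      rw [← hsumf, sum_Dterm_eq]
      linarith
    intro j
    have := (Finset.sum_eq_zero_iff_of_nonneg
      (fun j _ => mul_nonneg (mul_nonneg hη.1.le (wt_pos m j).le)
        (by linarith [hfge j]))).1 hzero j (Finset.mem_univ j)
    have hpos : (0:ℝ) < η * wt m j := mul_pos hη.1 (wt_pos m j)
    have h2 : Tf p j - |Zf (ustar m θ j) - 1/2| = 0 :=
      (mul_eq_zero.1 this).resolve_left (ne_of_gt hpos)
    linarith
  -- assemble
  have ez : Tz p = Tz (pstar m θ) := funext fun j => hz j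
  have ef : Tf p = Tf (pstar m θ) := funext fun j => hf j
  have es : Ts p = Ts (pstar m θ) := funext fun j => hs j
  have et : Tt p = Tt (pstar m θ) := funext fun j => ht j
  have eu : Tu p = Tu (pstar m θ) := funext fun j => hu j
  show p = pstar m θ
  calc p = (Tz p, Tf p, Ts p, Tt p, Tu p) := rfl
    _ = (Tz (pstar m θ), Tf (pstar m θ), Ts (pstar m θ), Tt (pstar m θ), Tu (pstar m θ)) := by
        rw [ez, ef, es, et, eu]
    _ = pstar m θ := rfl

lemma argmin_wObj (hm : 2 ≤ m) (hθ : θ ∈ Set.Icc (0:ℝ) 1) (hη : η ∈ Set.Ioc (0:ℝ) 1) :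
    argminOn (wObj m η) (Flex m θ) = {pstar m θ} := by
  ext q
  simp only [argminOn, Set.mem_setOf_eq, Set.mem_singleton_iff]
  constructor
  · rintro ⟨hq, hmin⟩
    exact min_unique hm hθ hη hq (hmin _ (pstar_mem hθ))
  · rintro rfl
    exact ⟨pstar_mem hθ, fun y hy => pstar_min hm hθ hη hy⟩

end WeightedArgmin

section LexSide

variable {m : ℕ} {θ : ℝ} {p : Tup m}

def Pset (m : ℕ) (θ : ℝ) (k : ℕ) : Set (Tup m) :=
  {p | p ∈ Flex m θ ∧ ∀ j : Fin m, k ≤ j.val →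
    Ts p j = Af (ustar m θ j) ∧ Tt p j = Bf (ustar m θ j)}

lemma Pset_top (m : ℕ) (θ : ℝ) : Pset m θ m = Flex m θ := by
  ext p
  constructor
  · exact fun h => h.1
  · intro h
    exact ⟨h, fun j hj => absurd j.isLt (by omega)⟩

lemma pstar_mem_Pset (hθ : θ ∈ Set.Icc (0:ℝ) 1) (k : ℕ) : pstar m θ ∈ Pset m θ k :=
  ⟨pstar_mem hθ, fun _ _ => ⟨rfl, rfl⟩⟩

lemma u_forced (hp : p ∈ Flex m θ) (hθ : θ ∈ Set.Icc (0:ℝ) 1) :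
    ∀ d (j : Fin m), m - 1 - j.val ≤ d →
    (∀ l : Fin m, j.val < l.val → Tz p l = Zf (ustar m θ l)) →
    Tu p j = ustar m θ j := by
  intro d
  induction d with
  | zero =>
    intro j hd _
    have hj : j.val = m - 1 := by have := j.isLt; omega
    rw [hp.1 j hj, ustar_top hθ hj]
  | succ d ih =>
    intro j hd hzs
    by_cases hj : j.val = m - 1
    · rw [hp.1 j hj, ustar_top hθ hj]
    · have hj1 : j.val + 1 < m := by have := j.isLt; omega
      have hrec := hp.2.2 ⟨j.val+1, hj1⟩ (by simp)
      have hu1 : Tu p ⟨j.val+1, hj1⟩ = ustar m θ ⟨j.val+1, hj1⟩ := by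
        refine ih ⟨j.val+1, hj1⟩ (by simp; omega) ?_
        intro l hl
        exact hzs l (by simp at hl; omega)
      have hz1 : Tz p ⟨j.val+1, hj1⟩ = Zf (ustar m θ ⟨j.val+1, hj1⟩) := hzs _ (by simp)
      have heq : Tu p j = 3 * Tu p ⟨j.val+1, hj1⟩ - 2 * Tz p ⟨j.val+1, hj1⟩ := hrec
      have h2 : ustar m θ j = Tm (ustar m θ ⟨j.val+1, hj1⟩) :=
        ustar_succ (i := ⟨j.val+1, hj1⟩) (by simp)
      rw [heq, hu1, hz1, h2]
      unfold Tm
      ring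

lemma Pset_z {k : ℕ} (hp : p ∈ Pset m θ k) (l : Fin m) (hl : k ≤ l.val) :
    Tz p l = Zf (ustar m θ l) := by
  have h := hp.2 l hl
  rw [(hp.1.2.1 l).2.2.1, h.1, h.2]
  unfold Zf
  ring

lemma Pset_u {k : ℕ} (hθ : θ ∈ Set.Icc (0:ℝ) 1) (hp : p ∈ Pset m θ k) (j : Fin m)
    (hj : k ≤ j.val + 1) : Tu p j = ustar m θ j := by
  refine u_forced hp.1 hθ m j (by omega) ?_
  intro l hl
  exact Pset_z hp l (by omega)

lemma lex_step (hθ : θ ∈ Set.Icc (0:ℝ) 1) {k : ℕ} (hk : k < m) :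
    argminOn (fun p => Ts p ⟨k, hk⟩ + Tt p ⟨k, hk⟩) (Pset m θ (k+1)) = Pset m θ k := by
  have hps := pstar_mem_Pset (m := m) hθ (k+1)
  ext p
  simp only [argminOn, Set.mem_setOf_eq]
  constructor
  · rintro ⟨hpP, hmin⟩
    have hmin' := hmin _ hps
    have hval : Ts (pstar m θ) ⟨k, hk⟩ + Tt (pstar m θ) ⟨k, hk⟩
        = Af (ustar m θ ⟨k, hk⟩) + Bf (ustar m θ ⟨k, hk⟩) := rfl
    rw [hval] at hmin'
    have hu : Tu p ⟨k, hk⟩ = ustar m θ ⟨k, hk⟩ := Pset_u hθ hpP _ le_rfl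
    have hs := s_ge hpP.1 (⟨k, hk⟩ : Fin m)
    have ht := t_ge hpP.1 (⟨k, hk⟩ : Fin m)
    rw [hu] at hs ht
    refine ⟨hpP.1, fun j hj => ?_⟩
    rcases eq_or_lt_of_le hj with heq | hlt
    · have hjk : j = ⟨k, hk⟩ := Fin.ext heq.symm
      subst hjk
      exact ⟨le_antisymm (by linarith) hs, le_antisymm (by linarith) ht⟩
    · exact hpP.2 j (by omega)
  · intro hpP
    have h1 : p ∈ Pset m θ (k+1) := ⟨hpP.1, fun j hj => hpP.2 j (by omega)⟩
    refine ⟨h1, fun q hq => ?_⟩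
    have hpk := hpP.2 ⟨k, hk⟩ le_rfl
    have hu : Tu q ⟨k, hk⟩ = ustar m θ ⟨k, hk⟩ := Pset_u hθ hq _ le_rfl
    have hs := s_ge hq.1 (⟨k, hk⟩ : Fin m)
    have ht := t_ge hq.1 (⟨k, hk⟩ : Fin m)
    rw [hu] at hs ht
    rw [hpk.1, hpk.2]
    linarith

lemma fold_take (hθ : θ ∈ Set.Icc (0:ℝ) 1) :
    ∀ n, n ≤ m →
    (((List.finRange m).reverse.take n).foldl
      (fun S i => argminOn (fun p => Ts p i + Tt p i) S) (Flex m θ)) = Pset m θ (m - n) := by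
  intro n
  induction n with
  | zero =>
    intro _
    rw [List.take_zero, List.foldl_nil, Nat.sub_zero, Pset_top]
  | succ n ih =>
    intro hn
    have hn' : n < (List.finRange m).reverse.length := by
      rw [List.length_reverse, List.length_finRange]; omega
    have hk : m - 1 - n < m := by omega
    have hget : (List.finRange m).reverse[n]? = some (⟨m - 1 - n, hk⟩ : Fin m) := by
      rw [List.getElem?_eq_getElem hn', List.getElem_reverse]
      congr 1
      simp only [List.getElem_finRange, List.length_finRange, Fin.ext_iff, Fin.coe_cast,
        Fin.val_mk]
    rw [List.take_succ, hget]
    simp only [Option.toList_some]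
    rw [List.foldl_append, ih (by omega), List.foldl_cons, List.foldl_nil]
    have hmn : m - n = (m - 1 - n) + 1 := by omega
    rw [hmn, lex_step hθ hk]
    have heq : m - (n + 1) = m - 1 - n := by omega
    rw [heq]

lemma Slex_eq (hm : 2 ≤ m) (hθ : θ ∈ Set.Icc (0:ℝ) 1) :
    Slex m θ = {pstar m θ} := by
  have hfold : ((List.finRange m).reverse.foldl
      (fun S i => argminOn (fun p => Ts p i + Tt p i) S) (Flex m θ)) = Pset m θ 0 := by
    have := fold_take (m := m) hθ m le_rfl
    rw [List.take_of_length_le (by rw [List.length_reverse, List.length_finRange])] at this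
    rw [this]
    norm_num
  unfold Slex
  rw [hfold]
  ext p
  simp only [argminOn, Set.mem_setOf_eq, Set.mem_singleton_iff]
  have hps : pstar m θ ∈ Pset m θ 0 := pstar_mem_Pset hθ 0
  have hfstar : ∀ q, q ∈ Pset m θ 0 → ∀ j : Fin m, |Zf (ustar m θ j) - 1/2| ≤ Tf q j := by
    intro q hq j
    have hc := hq.1.2.1 j
    rw [← Pset_z hq j (by omega)]
    exact abs_le.mpr ⟨by linarith [hc.2.2.2.1], hc.2.2.2.2.1⟩
  constructor
  · rintro ⟨hpP, hmin⟩
    have hmin' := hmin _ hps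
    have hfs : ∑ i : Fin m, Tf (pstar m θ) i = ∑ i : Fin m, |Zf (ustar m θ i) - 1/2| := rfl
    rw [hfs] at hmin'
    have hsum0 : ∑ i : Fin m, (Tf p i - |Zf (ustar m θ i) - 1/2|) = 0 := by
      rw [Finset.sum_sub_distrib]
      have := Finset.sum_nonneg (fun j (_ : j ∈ Finset.univ) => sub_nonneg.2 (hfstar p hpP j))
      rw [Finset.sum_sub_distrib] at this
      linarith
    have hf : ∀ j : Fin m, Tf p j = |Zf (ustar m θ j) - 1/2| := by
      intro j
      have := (Finset.sum_eq_zero_iff_of_nonneg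
        (fun j _ => sub_nonneg.2 (hfstar p hpP j))).1 hsum0 j (Finset.mem_univ j)
      linarith
    have ez : Tz p = Tz (pstar m θ) := funext fun j => Pset_z hpP j (by omega)
    have ef : Tf p = Tf (pstar m θ) := funext fun j => hf j
    have es : Ts p = Ts (pstar m θ) := funext fun j => (hpP.2 j (by omega)).1
    have et : Tt p = Tt (pstar m θ) := funext fun j => (hpP.2 j (by omega)).2
    have eu : Tu p = Tu (pstar m θ) := funext fun j => Pset_u hθ hpP j (by omega)
    calc p = (Tz p, Tf p, Ts p, Tt p, Tu p) := rfl
      _ = (Tz (pstar m θ), Tf (pstar m θ), Ts (pstar m θ), Tt (pstar m θ), Tu (pstar m θ)) := by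
          rw [ez, ef, es, et, eu]
      _ = pstar m θ := rfl
  · rintro rfl
    refine ⟨hps, fun q hq => ?_⟩
    exact Finset.sum_le_sum fun j _ => hfstar q hq j

end LexSide

end S10

/-- for every integer `m ≥ 2`, every `θ ∈ [0,1]` and every `η ∈ (0,1]`,
the set of minimizers of the weighted objective over `Flex(m, θ)` equals `Slex(m, θ)`. -/
theorem stmt10 (m : ℕ) (hm : 2 ≤ m) (θ : ℝ) (hθ : θ ∈ Set.Icc (0 : ℝ) 1)
    (η : ℝ) (hη : η ∈ Set.Ioc (0 : ℝ) 1) :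
    argminOn (wObj m η) (Flex m θ) = Slex m θ := by
  rw [S10.argmin_wObj hm hθ hη, S10.Slex_eq hm hθ]
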